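/- Let (f_{ij}) be a g×g matrix over R[[t]] (R an integral domain containing ℚ) whose constant-term matrix (f_{ij}(0)) is invertible over R. Suppose φ_1,…,φ_g ∈ t·R[[t]] satisfy ∑_j f_{ij}(φ_j)·φ_j' = δ_{i1} for all i. Then for each fixed order m ≥ 1, the coefficients of t^m in φ_1,…,φ_g are uniquely determined by the coefficients of lower order, via solving the linear system with matrix (f_{ij}(0)): formally, if ψ_1,…,ψ_g ∈ t·R[[t]] also satisfy the same system, then φ_j = ψ_j for all j. -/

import Mathlib

/-!
Two solutions that agree modulo `X ^ (n + 1)` have the same coefficients of `f_{ij}(φ_j)` up to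
order `n` and of `φ_j'` up to order `n - 1`, so the coefficient of `X ^ n` in the difference of the
two systems is `(n + 1) • f(0) (φ_{n+1} - ψ_{n+1})`. Invertibility of `f(0)` and of `n + 1` then
forces agreement modulo `X ^ (n + 2)`.
-/

open PowerSeries Finset in
/-- Composition `f(g)` of formal power series, valid when `g` has zero constant term. -/
noncomputable def psComp {R : Type*} [CommRing R] (f g : PowerSeries R) : PowerSeries R :=
  PowerSeries.mk fun n => ∑ m ∈ Finset.range (n + 1),
    PowerSeries.coeff (R := R) m f * PowerSeries.coeff (R := R) n (g ^ m)

open PowerSeries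

section

variable {R : Type*} [CommRing R]

theorem coeff_psComp (f g : R⟦X⟧) (n : ℕ) :
    coeff n (psComp f g) = ∑ m ∈ Finset.range (n + 1), coeff m f * coeff n (g ^ m) :=
  coeff_mk _ _

theorem constantCoeff_psComp (f g : R⟦X⟧) : constantCoeff (psComp f g) = constantCoeff f := by
  rw [← coeff_zero_eq_constantCoeff_apply, coeff_psComp]
  simp

theorem X_pow_dvd_psComp_sub (f : R⟦X⟧) {φ ψ : R⟦X⟧} {n : ℕ} (h : X ^ n ∣ φ - ψ) :
    X ^ n ∣ psComp f φ - psComp f ψ := by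
  rw [X_pow_dvd_iff]
  intro a ha
  rw [map_sub, coeff_psComp, coeff_psComp, ← Finset.sum_sub_distrib]
  refine Finset.sum_eq_zero fun m _ => ?_
  rw [← mul_sub, ← map_sub, X_pow_dvd_iff.mp (h.trans (sub_dvd_pow_sub_pow φ ψ m)) a ha,
    mul_zero]

theorem X_pow_dvd_derivative_sub {φ ψ : R⟦X⟧} {n : ℕ} (h : X ^ (n + 1) ∣ φ - ψ) :
    X ^ n ∣ d⁄dX R φ - d⁄dX R ψ := by
  rw [← map_sub, X_pow_dvd_iff]
  intro a ha
  rw [coeff_derivative, X_pow_dvd_iff.mp h (a + 1) (by omega), zero_mul]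

theorem coeff_mul_sub_mul_of_X_pow_dvd {A B u v : R⟦X⟧} {n : ℕ} (hAB : X ^ (n + 1) ∣ A - B)
    (huv : X ^ n ∣ u - v) :
    coeff n (A * u - B * v) = constantCoeff A * coeff n (u - v) := by
  obtain ⟨w, hw⟩ := huv
  have hsplit : A * u - B * v = X ^ n * (A * w) + (A - B) * v := by linear_combination A * hw
  have hAB_v : coeff n ((A - B) * v) = 0 :=
    X_pow_dvd_iff.mp (dvd_mul_of_dvd_left hAB v) n (Nat.lt_succ_self n)
  rw [hsplit, hw, map_add, hAB_v, add_zero, coeff_X_pow_mul', coeff_X_pow_mul', if_pos le_rfl,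
    if_pos le_rfl, Nat.sub_self, coeff_zero_eq_constantCoeff_apply,
    coeff_zero_eq_constantCoeff_apply, map_mul]

theorem eq_of_forall_X_pow_dvd_sub {φ ψ : R⟦X⟧} (h : ∀ n, X ^ (n + 1) ∣ φ - ψ) :
    φ = ψ := by
  ext n
  rw [← sub_eq_zero, ← map_sub]
  exact X_pow_dvd_iff.mp (h n) n (Nat.lt_succ_self n)

theorem isUnit_natCast_add_one_of_algebra_rat [Algebra ℚ R] (n : ℕ) :
    IsUnit ((n : R) + 1) := by
  simpa using (Nat.cast_add_one_ne_zero (R := ℚ) n).isUnit.map (algebraMap ℚ R)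

open Matrix in
theorem X_pow_succ_dvd_sub_of_system {ι : Type*} [Algebra ℚ R] [Fintype ι] [DecidableEq ι]
    {f : Matrix ι ι R⟦X⟧} (hf0 : IsUnit (f.map constantCoeff)) {φ ψ : ι → R⟦X⟧}
    (hsys : ∀ i, ∑ j, psComp (f i j) (φ j) * d⁄dX R (φ j)
      = ∑ j, psComp (f i j) (ψ j) * d⁄dX R (ψ j))
    {n : ℕ} (hn : ∀ j, X ^ (n + 1) ∣ φ j - ψ j) (j : ι) :
    X ^ (n + 2) ∣ φ j - ψ j := by
  set w : ι → R := fun j => coeff n (d⁄dX R (φ j) - d⁄dX R (ψ j))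
  have hw : f.map constantCoeff *ᵥ w = 0 := by
    funext i
    have hcoeff := congrArg (coeff n) (sub_eq_zero.mpr (hsys i))
    rw [← Finset.sum_sub_distrib, map_sum, map_zero] at hcoeff
    simp only [mulVec, dotProduct, Matrix.map_apply, Pi.zero_apply, w]
    rw [← hcoeff]
    refine Finset.sum_congr rfl fun k _ => ?_
    rw [coeff_mul_sub_mul_of_X_pow_dvd (X_pow_dvd_psComp_sub _ (hn k))
      (X_pow_dvd_derivative_sub (hn k)), constantCoeff_psComp]
  have hwj : coeff (n + 1) (φ j - ψ j) * ((n : R) + 1) = 0 := by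
    rw [← coeff_derivative, map_sub]
    exact congrFun (mulVec_injective_of_isUnit hf0 (hw.trans (mulVec_zero _).symm)) j
  have hlead : coeff (n + 1) (φ j - ψ j) = 0 :=
    (isUnit_natCast_add_one_of_algebra_rat n).mul_left_eq_zero.mp hwj
  rw [X_pow_dvd_iff]
  intro a ha
  rcases Nat.lt_succ_iff_lt_or_eq.mp ha with ha | rfl
  · exact X_pow_dvd_iff.mp (hn j) a ha
  · exact hlead

end

open PowerSeries in
theorem stmt_1_general {R : Type*} [CommRing R] [Algebra ℚ R] (g : ℕ)
    (f : Matrix (Fin g) (Fin g) (PowerSeries R))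
    (hf0 : IsUnit (f.map (PowerSeries.constantCoeff (R := R))))
    (φ ψ : Fin g → PowerSeries R)
    (hφ0 : ∀ j, PowerSeries.constantCoeff (R := R) (φ j) = 0)
    (hψ0 : ∀ j, PowerSeries.constantCoeff (R := R) (ψ j) = 0)
    (hφ : ∀ i, ∑ j, psComp (f i j) (φ j) * (φ j).derivativeFun
        = if (i : ℕ) = 0 then 1 else 0)
    (hψ : ∀ i, ∑ j, psComp (f i j) (ψ j) * (ψ j).derivativeFun
        = if (i : ℕ) = 0 then 1 else 0) :
    φ = ψ := by
  have hsys : ∀ i, ∑ j, psComp (f i j) (φ j) * d⁄dX R (φ j)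
      = ∑ j, psComp (f i j) (ψ j) * d⁄dX R (ψ j) :=
    fun i => (hφ i).trans (hψ i).symm
  have hdvd : ∀ n j, X ^ (n + 1) ∣ φ j - ψ j := by
    intro n
    induction n with
    | zero => intro j; rw [pow_one, X_dvd_iff, map_sub, hφ0, hψ0, sub_self]
    | succ n ih => exact X_pow_succ_dvd_sub_of_system hf0 hsys ih
  funext j
  exact eq_of_forall_X_pow_dvd_sub fun n => hdvd n j

open PowerSeries in
/-- Uniqueness part of Lemma `curves`: if the constant-term matrix of `f` is invertible over `R`,
then any two solutions `φ, ψ ∈ (t·R[[t]])^g` of the system `∑_j f_{ij}(φ_j) · φ_j' = δ_{i1}`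
coincide. -/
theorem stmt_1 {R : Type*} [CommRing R] [IsDomain R] [Algebra ℚ R] (g : ℕ)
    (f : Matrix (Fin g) (Fin g) (PowerSeries R))
    (hf0 : IsUnit (f.map (PowerSeries.constantCoeff (R := R))))
    (φ ψ : Fin g → PowerSeries R)
    (hφ0 : ∀ j, PowerSeries.constantCoeff (R := R) (φ j) = 0)
    (hψ0 : ∀ j, PowerSeries.constantCoeff (R := R) (ψ j) = 0)
    (hφ : ∀ i, ∑ j, psComp (f i j) (φ j) * (φ j).derivativeFun
        = if (i : ℕ) = 0 then 1 else 0)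
    (hψ : ∀ i, ∑ j, psComp (f i j) (ψ j) * (ψ j).derivativeFun
        = if (i : ℕ) = 0 then 1 else 0) :
    φ = ψ :=
  stmt_1_general g f hf0 φ ψ hφ0 hψ0 hφ hψ
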